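/- The n-qubit bilinear form ⟨·,·⟩ₙ is invariant under the n-qubit SLOCC-equivalence group: for every g : Fin n → SL(2,ℂ) and all n-qubit states a, b, one has ⟨g·a, g·b⟩ₙ = ⟨a,b⟩ₙ, where (g·a)(s) = Σ_t (∏ᵢ (g i)_{s i, t i}) a(t). -/
import Mathlib


/-- The `n`-qubit bilinear form `⟨a,b⟩ₙ = Σ_s (−1)^{wt(s)} a(s) b(s̄)`, where the sum runs
over bit strings `s : Fin n → Fin 2`, `wt(s)` is the Hamming weight and `s̄` the bitwise
flip of `s`. -/
noncomputable def nBilin (n : ℕ) (a b : (Fin n → Fin 2) → ℂ) : ℂ :=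
  ∑ s : Fin n → Fin 2, (-1 : ℂ) ^ (∑ i, (s i : ℕ)) * a s * b (fun i => 1 - s i)

/-- The action of the `n`-qubit SLOCC-equivalence group `SL(2,ℂ)×⋯×SL(2,ℂ)` on
`n`-qubit states: `(g·a)(s) = Σ_t (∏ᵢ (gᵢ)_{sᵢtᵢ}) a(t)`. -/
noncomputable def nSloccAct (n : ℕ) (g : Fin n → Matrix.SpecialLinearGroup (Fin 2) ℂ)
    (a : (Fin n → Fin 2) → ℂ) : (Fin n → Fin 2) → ℂ :=
  fun s => ∑ t : Fin n → Fin 2,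
    (∏ i, (g i : Matrix (Fin 2) (Fin 2) ℂ) (s i) (t i)) * a t

/-- Key single-qubit identity coming from `det g = 1`. -/
lemma single_qubit_key (n : ℕ) (g : Fin n → Matrix.SpecialLinearGroup (Fin 2) ℂ)
    (i : Fin n) (t u : Fin 2) :
    (∑ s : Fin 2, (-1:ℂ)^(s:ℕ) * ((g i : Matrix (Fin 2) (Fin 2) ℂ) s t *
        (g i : Matrix (Fin 2) (Fin 2) ℂ) (1-s) u))
      = (-1:ℂ)^(t:ℕ) * (if u = 1 - t then 1 else 0) := by
  obtain ⟨A, B, C, D, e⟩ : ∃ A B C D, (g i : Matrix (Fin 2) (Fin 2) ℂ) = !![A,B;C,D] :=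
    ⟨_, _, _, _, by ext a b; fin_cases a <;> fin_cases b <;> rfl⟩
  have hdet : A * D - B * C = 1 := by
    have h := (g i).2
    rw [e, Matrix.det_fin_two_of] at h
    exact h
  rw [e]
  fin_cases t <;> fin_cases u <;>
    simp [Fin.sum_univ_two, show (1:Fin 2) - 0 = 1 by decide,
      show (1:Fin 2) - 1 = 0 by decide] <;>
    (first
      | ring1
      | linear_combination hdet
      | linear_combination -hdet)

/-- The `n`-qubit bilinear form is invariant under the `n`-qubit SLOCC-equivalence group:
`⟨g·a, g·b⟩ₙ = ⟨a,b⟩ₙ`. -/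
theorem nBilin_slocc_invariant :
    ∀ (n : ℕ) (g : Fin n → Matrix.SpecialLinearGroup (Fin 2) ℂ)
      (a b : (Fin n → Fin 2) → ℂ),
      nBilin n (nSloccAct n g a) (nSloccAct n g b) = nBilin n a b := by
  intro n g a b
  unfold nBilin nSloccAct
  have expand : ∀ s : Fin n → Fin 2,
      (-1 : ℂ) ^ (∑ i, (s i : ℕ)) *
        (∑ t : Fin n → Fin 2, (∏ i, (g i : Matrix (Fin 2) (Fin 2) ℂ) (s i) (t i)) * a t) *
        (∑ u : Fin n → Fin 2, (∏ i, (g i : Matrix (Fin 2) (Fin 2) ℂ) (1 - s i) (u i)) * b u)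
      = ∑ t : Fin n → Fin 2, ∑ u : Fin n → Fin 2,
          (∏ i, ((-1:ℂ)^((s i : ℕ)) * ((g i : Matrix (Fin 2) (Fin 2) ℂ) (s i) (t i) *
            (g i : Matrix (Fin 2) (Fin 2) ℂ) (1 - s i) (u i)))) * (a t * b u) := by
    intro s
    rw [mul_assoc, Finset.sum_mul_sum, Finset.mul_sum]
    refine Finset.sum_congr rfl fun t _ => ?_
    rw [Finset.mul_sum]
    refine Finset.sum_congr rfl fun u _ => ?_
    simp only [Finset.prod_mul_distrib, Finset.prod_pow_eq_pow_sum]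
    ring
  simp_rw [expand]
  rw [Finset.sum_comm]
  refine Finset.sum_congr rfl fun t _ => ?_
  rw [Finset.sum_comm]
  have hsum : ∀ u : Fin n → Fin 2,
      (∑ s : Fin n → Fin 2, ∏ i, ((-1:ℂ)^((s i : ℕ)) *
          ((g i : Matrix (Fin 2) (Fin 2) ℂ) (s i) (t i) *
           (g i : Matrix (Fin 2) (Fin 2) ℂ) (1 - s i) (u i))))
      = ∏ i, ((-1:ℂ)^((t i : ℕ)) * (if u i = 1 - t i then 1 else 0)) := by
    intro u
    have h := (Finset.prod_univ_sum (fun _ : Fin n => (Finset.univ : Finset (Fin 2)))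
      (fun i c => (-1:ℂ)^((c : Fin 2) : ℕ) * ((g i : Matrix (Fin 2) (Fin 2) ℂ) c (t i) *
        (g i : Matrix (Fin 2) (Fin 2) ℂ) (1 - c) (u i)))).symm
    rw [Fintype.piFinset_univ] at h
    rw [h]
    exact Finset.prod_congr rfl fun i _ => single_qubit_key n g i (t i) (u i)
  simp_rw [← Finset.sum_mul, hsum, Finset.prod_mul_distrib, Finset.prod_pow_eq_pow_sum]
  have hind : ∀ u : Fin n → Fin 2,
      (∏ i, (if u i = 1 - t i then (1:ℂ) else 0)) = if u = (fun i => 1 - t i) then 1 else 0 := by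
    intro u
    rw [Finset.prod_boole]
    simp [funext_iff]
  simp_rw [hind]
  rw [Finset.sum_eq_single (fun i => 1 - t i)]
  · simp
    ring
  · intro u _ hu
    simp [hu]
  · intro h
    exact absurd (Finset.mem_univ _) h
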